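/- arXiv:2206.14035 — 3 statements merged into one kernel-verified Lean document; each statement's English description precedes it below -/
import Mathlib

section
/- For every natural number j, W(j) + 2p^j(p − 1) = 2(p^n − 1)·r(j) + 2p^{j+1} + 1. (This is the closed formula for the cohomological degree of the generator w_{n+j+1/2} = y_j^{p−1} w_{n+j}.) -/
/-!
Both sides of the formula satisfy the same recursion in steps of `n + 1`. For `j ≤ n` one has
`r(j) = p ^ j`, and passing from `j` to `j + n + 1` adds the single term `p ^ (k(n+1))` to `q(k)`,
so `r(j + n + 1) = r(j) + (p ^ n - 1) p ^ (j + 1) + 1`; with this, the recursion defining `W`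
turns the formula at `j` into the formula at `j + n + 1` by a polynomial identity in `p`.
-/

/-- `q(k) = ∑_{m<k} p^{m(n+1)}`. -/
def qq (p n k : ℕ) : ℕ := ∑ m ∈ Finset.range k, p ^ (m * (n + 1))

/-- `r(j) = p^{i+1}(p^n-1) q(k) + k + p^i` where `j = i + k(n+1)`, `0 ≤ i ≤ n`. -/
def rr (p n j : ℕ) : ℕ :=
  p ^ (j % (n + 1) + 1) * (p ^ n - 1) * qq p n (j / (n + 1)) + j / (n + 1) + p ^ (j % (n + 1))

/-- `r'(j) = p^{j+1} - r(j)`. -/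
def rr' (p n j : ℕ) : ℕ := p ^ (j + 1) - rr p n j

/-- `W(j) = |w_{n+j}|`: `W(j) = 2p^{n+j}+1` for `0 ≤ j ≤ n`, and
`W(j+n+1) = 2p^j(p-1) + W(j) + 2(p^n-1)(p^{n+j+1}+1)`. -/
def WW (p n : ℕ) (j : ℕ) : ℕ :=
  if h : j < n + 1 then 2 * p ^ (n + j) + 1
  else 2 * p ^ (j - (n + 1)) * (p - 1) + WW p n (j - (n + 1))
       + 2 * (p ^ n - 1) * (p ^ ((j - (n + 1)) + n + 1) + 1)
termination_by j
decreasing_by omega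

lemma qq_succ (p n k : ℕ) : qq p n (k + 1) = qq p n k + p ^ (k * (n + 1)) :=
  Finset.sum_range_succ _ _

lemma rr_of_lt {p n j : ℕ} (hj : j < n + 1) : rr p n j = p ^ j := by
  simp [rr, qq, Nat.mod_eq_of_lt hj, Nat.div_eq_of_lt hj]

lemma rr_add_period {p : ℕ} (n j : ℕ) (hp : 1 ≤ p) :
    rr p n (j + (n + 1)) = rr p n j + (p ^ n - 1) * p ^ (j + 1) + 1 := by
  have hpow : p ^ (j % (n + 1) + 1) * p ^ (j / (n + 1) * (n + 1)) = p ^ (j + 1) := by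
    rw [← pow_add]
    congr 1
    have := Nat.mod_add_div' j (n + 1)
    omega
  rw [rr, rr, Nat.add_mod_right, Nat.add_div_right _ n.succ_pos, qq_succ]
  have hpn : 1 ≤ p ^ n := Nat.one_le_pow _ _ hp
  zify [hpn] at hpow ⊢
  linear_combination ((p : ℤ) ^ n - 1) * hpow

lemma WW_of_lt {p n j : ℕ} (hj : j < n + 1) : WW p n j = 2 * p ^ (n + j) + 1 := by
  rw [WW, dif_pos hj]

lemma WW_add_period (p n j : ℕ) :
    WW p n (j + (n + 1)) =
      2 * p ^ j * (p - 1) + WW p n j + 2 * (p ^ n - 1) * (p ^ (j + n + 1) + 1) := by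
  rw [WW, dif_neg (by omega), Nat.add_sub_cancel]

theorem W_half_closed_formula_general (p n : ℕ) (hp : p.Prime) (j : ℕ) :
    WW p n j + 2 * p ^ j * (p - 1) = 2 * (p ^ n - 1) * rr p n j + 2 * p ^ (j + 1) + 1 := by
  have hp1 : 1 ≤ p := hp.one_lt.le
  have hpn : 1 ≤ p ^ n := Nat.one_le_pow _ _ hp1
  induction j using Nat.strong_induction_on with
  | _ j ih =>
    by_cases hj : j < n + 1
    · rw [WW_of_lt hj, rr_of_lt hj]
      zify [hp1, hpn]
      ring
    · obtain ⟨i, rfl⟩ : ∃ i, j = i + (n + 1) := ⟨j - (n + 1), by omega⟩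
      have ih_i := ih i (by omega)
      rw [WW_add_period, rr_add_period n i hp1]
      zify [hp1, hpn] at ih_i ⊢
      linear_combination ih_i

/-- Closed formula for the degree of `w_{n+j+1/2} = y_j^{p-1} w_{n+j}`:
`W(j) + 2p^j(p-1) = 2(p^n-1)*r(j) + 2p^{j+1} + 1`. -/
theorem W_half_closed_formula (p n : ℕ) (hp : p.Prime) (hn : 1 ≤ n) (j : ℕ) :
    WW p n j + 2 * p ^ j * (p - 1) = 2 * (p ^ n - 1) * rr p n j + 2 * p ^ (j + 1) + 1 :=
  W_half_closed_formula_general p n hp j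
end

section
/- If p = 2, then: (a) for every j with 0 ≤ j ≤ n+1 one has r(j) = r'(j) = 2^j; (b) for every j > n+1 one has r(j) < r'(j); and (c) for every j one has r'(j) < r(j+1). -/
/-!
Summing the geometric series gives `(p^{n+1} - 1) q(k) + 1 = p^{k(n+1)}`, which turns the definition
into `r(j) = p^j + k - p^i (p - 1) q(k)`. For `p = 2` this reads `r(j) = 2^j + k - 2^i q(k)` and
`r'(j) = 2^j - k + 2^i q(k)`, so (a) and (b) amount to comparing `k` with `2^i q(k)` (equal exactly
when `j ≤ n + 1`), and (c) to the bound `(2^n + 1) q(k) < 2^{k(n+1)}`, valid once `n ≥ 1`.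
-/

lemma qq_mul_add_one {p : ℕ} (hp : 0 < p) (n k : ℕ) :
    qq p n k * (p ^ (n + 1) - 1) + 1 = p ^ (k * (n + 1)) := by
  obtain ⟨x, hx⟩ : ∃ x, p ^ (n + 1) = x + 1 := ⟨_, (Nat.succ_pred_eq_of_pos (by positivity)).symm⟩
  simpa only [qq, mul_comm _ (n + 1), pow_mul, hx, Nat.add_sub_cancel] using geom_sum_mul_add x k

lemma rr_add_mul_qq {p : ℕ} (hp : 0 < p) {n i : ℕ} (hi : i ≤ n) (k : ℕ) :
    rr p n (i + k * (n + 1)) + p ^ i * (p - 1) * qq p n k = p ^ (i + k * (n + 1)) + k := by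
  have hmod : (i + k * (n + 1)) % (n + 1) = i := by
    rw [Nat.add_mul_mod_self_right, Nat.mod_eq_of_lt (by omega)]
  have hdiv : (i + k * (n + 1)) / (n + 1) = k := by
    rw [Nat.add_mul_div_right _ _ (by omega), Nat.div_eq_of_lt (by omega), zero_add]
  rw [rr, hmod, hdiv, pow_add p i (k * (n + 1)), ← qq_mul_add_one hp n k]
  obtain ⟨a, rfl⟩ : ∃ a, p = a + 1 := ⟨p - 1, by omega⟩
  obtain ⟨b, hb⟩ : ∃ b, (a + 1) ^ n = b + 1 := ⟨_, (Nat.succ_pred_eq_of_pos (by positivity)).symm⟩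
  have hsucc : (a + 1) ^ (n + 1) - 1 = (a + 1) * b + a := by
    rw [pow_succ, hb, show (b + 1) * (a + 1) = (a + 1) * b + a + 1 by ring, Nat.add_sub_cancel]
  rw [hsucc, hb, pow_succ, Nat.add_sub_cancel, Nat.add_sub_cancel]
  ring

lemma le_qq {p : ℕ} (hp : 0 < p) (n k : ℕ) : k ≤ qq p n k := by
  simpa [qq] using Finset.card_nsmul_le_sum (Finset.range k) (fun m => p ^ (m * (n + 1))) 1
    (fun m _ => Nat.one_le_pow _ _ hp)

lemma lt_qq {p : ℕ} (hp : 1 < p) (n : ℕ) {k : ℕ} (hk : 2 ≤ k) : k < qq p n k := by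
  have hsum := Finset.sum_lt_sum (s := Finset.range k) (f := fun _ => 1)
    (g := fun m => p ^ (m * (n + 1))) (fun m _ => Nat.one_le_pow _ _ (by omega))
    ⟨1, Finset.mem_range.mpr hk, Nat.one_lt_pow (by omega) hp⟩
  simpa [qq] using hsum

lemma pow_add_one_mul_qq_lt {p n : ℕ} (hp : 2 ≤ p) (hn : 1 ≤ n) (k : ℕ) :
    (p ^ n + 1) * qq p n k < p ^ (k * (n + 1)) := by
  have hpn : p ≤ p ^ n := Nat.le_self_pow (by omega) p
  have hle : p ^ n + 1 ≤ p ^ (n + 1) - 1 := by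
    have : p ^ n * 2 ≤ p ^ n * p := Nat.mul_le_mul_left _ hp
    rw [pow_succ]; omega
  calc (p ^ n + 1) * qq p n k ≤ qq p n k * (p ^ (n + 1) - 1) := by
        rw [mul_comm]; exact Nat.mul_le_mul_left _ hle
    _ < p ^ (k * (n + 1)) := by have := qq_mul_add_one (by omega : 0 < p) n k; omega

lemma exists_eq_add_mul (n j : ℕ) : ∃ i k, i ≤ n ∧ j = i + k * (n + 1) :=
  ⟨j % (n + 1), j / (n + 1), Nat.le_of_lt_succ (Nat.mod_lt _ n.succ_pos),
    by rw [Nat.mul_comm]; exact (Nat.mod_add_div j (n + 1)).symm⟩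

lemma rr_two_add (n : ℕ) {i : ℕ} (hi : i ≤ n) (k : ℕ) :
    rr 2 n (i + k * (n + 1)) + 2 ^ i * qq 2 n k = 2 ^ (i + k * (n + 1)) + k := by
  simpa using rr_add_mul_qq two_pos hi k

lemma rr'_two_add (n : ℕ) {i : ℕ} (hi : i ≤ n) (k : ℕ) :
    rr' 2 n (i + k * (n + 1)) + k = 2 ^ (i + k * (n + 1)) + 2 ^ i * qq 2 n k := by
  have hr := rr_two_add n hi k
  have hk : k ≤ 2 ^ i * qq 2 n k :=
    (le_qq two_pos n k).trans (Nat.le_mul_of_pos_left _ (by positivity))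
  rw [rr', pow_succ]
  omega

lemma lt_two_pow_mul_qq {n i k : ℕ} (hi : i ≤ n) (hj : n + 1 < i + k * (n + 1)) :
    k < 2 ^ i * qq 2 n k := by
  obtain rfl | rfl | hk : k = 0 ∨ k = 1 ∨ 2 ≤ k := by omega
  · omega
  · simp only [qq, Finset.sum_range_one, zero_mul, pow_zero, mul_one]
    exact Nat.one_lt_two_pow (by omega)
  · exact (lt_qq one_lt_two n hk).trans_le (Nat.le_mul_of_pos_left _ (by positivity))

lemma rr'_two_lt_rr_two_succ_of_lt {n i : ℕ} (hn : 1 ≤ n) (hi : i < n) (k : ℕ) :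
    rr' 2 n (i + k * (n + 1)) < rr 2 n (i + k * (n + 1) + 1) := by
  have hr' := rr'_two_add n hi.le k
  have hr := rr_two_add n (show i + 1 ≤ n from hi) k
  rw [Nat.add_right_comm] at hr
  have hq : 3 * qq 2 n k < 2 ^ (k * (n + 1)) := by
    have : 3 ≤ 2 ^ n + 1 := by have := Nat.le_self_pow (by omega : n ≠ 0) 2; omega
    exact (Nat.mul_le_mul_right _ this).trans_lt (pow_add_one_mul_qq_lt le_rfl hn k)
  have hq' : 3 * (2 ^ i * qq 2 n k) < 2 ^ (i + k * (n + 1)) := by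
    rw [pow_add, mul_left_comm]; exact Nat.mul_lt_mul_of_pos_left hq (by positivity)
  rw [pow_succ, pow_succ] at hr
  linarith

lemma rr'_two_lt_rr_two_succ_of_eq {n : ℕ} (hn : 1 ≤ n) (k : ℕ) :
    rr' 2 n (n + k * (n + 1)) < rr 2 n (n + k * (n + 1) + 1) := by
  have hr' := rr'_two_add n le_rfl k
  have hr := rr_two_add n (Nat.zero_le n) (k + 1)
  rw [show 0 + (k + 1) * (n + 1) = n + k * (n + 1) + 1 by ring, qq, Finset.sum_range_succ,
    ← qq] at hr
  have hq := pow_add_one_mul_qq_lt le_rfl hn k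
  have hE : 2 * 2 ^ (k * (n + 1)) ≤ 2 ^ n * 2 ^ (k * (n + 1)) :=
    Nat.mul_le_mul_right _ (Nat.le_self_pow (by omega) 2)
  rw [add_mul, one_mul] at hq
  rw [pow_succ, pow_add, pow_zero, one_mul] at hr
  rw [pow_add] at hr'
  omega

/-- For `p = 2`: `r(j) = r'(j) = 2^j` for `0 <= j <= n+1`, `r(j) < r'(j)` for `j > n+1`,
and `r'(j) < r(j+1)` for all `j`. -/
theorem r_r'_at_two (n : ℕ) (hn : 1 ≤ n) :
    (∀ j ≤ n + 1, rr 2 n j = 2 ^ j ∧ rr' 2 n j = 2 ^ j) ∧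
    (∀ j, n + 1 < j → rr 2 n j < rr' 2 n j) ∧
    (∀ j, rr' 2 n j < rr 2 n (j + 1)) := by
  refine ⟨fun j hj => ?_, fun j hj => ?_, fun j => ?_⟩
  · obtain hj | rfl := Nat.of_le_succ hj
    · have hr := rr_two_add n hj 0
      have hr' := rr'_two_add n hj 0
      simp_all [qq]
    · have hr := rr_two_add n (Nat.zero_le n) 1
      have hr' := rr'_two_add n (Nat.zero_le n) 1
      simp_all [qq]
  · obtain ⟨i, k, hi, rfl⟩ := exists_eq_add_mul n j
    have := rr_two_add n hi k
    have := rr'_two_add n hi k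
    have := lt_two_pow_mul_qq hi hj
    omega
  · obtain ⟨i, k, hi, rfl⟩ := exists_eq_add_mul n j
    obtain hi | rfl := hi.lt_or_eq
    · exact rr'_two_lt_rr_two_succ_of_lt hn hi k
    · exact rr'_two_lt_rr_two_succ_of_eq hn k
end

section
/- Let p be an odd prime and n ≥ 1. For all natural numbers j, i, k with 0 ≤ k ≤ i < n, one has the strict inequality (r'(j) + r(j+i+1))·(p^n − 1) < p^{n+j+i+2} + p^k − p^{j+i+1} − 1. (This inequality shows that a hypothetical Adams differential from the degree of w_{n+j+i+1} hitting v^r times the class in the degree of z_{n+j+i−k+2}^{p^k} would have length r > r'(j), so it cannot occur.) -/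
theorem pow_succ_sub_one_mul_qq (p n k : ℕ) :
    ((p : ℤ) ^ (n + 1) - 1) * qq p n k = (p : ℤ) ^ (k * (n + 1)) - 1 := by
  simp only [qq, Nat.cast_sum, Nat.cast_pow, mul_comm _ (n + 1), pow_mul]
  rw [mul_comm, geom_sum_mul]

theorem rr_le_pow_add_div {p : ℕ} (hp : 1 ≤ p) (n m : ℕ) :
    rr p n m ≤ p ^ m + m / (n + 1) := by
  set i := m % (n + 1)
  set k := m / (n + 1)
  have hm : p ^ m = p ^ i * p ^ (k * (n + 1)) := by
    rw [← pow_add, mul_comm k, Nat.mod_add_div]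
  have hpn : 1 ≤ p ^ n := Nat.one_le_pow _ _ hp
  have hq : (p : ℤ) ^ (i + 1) * ((p : ℤ) ^ n - 1) * qq p n k
      ≤ (p : ℤ) ^ i * ((p : ℤ) ^ (k * (n + 1)) - 1) := by
    have hpp : (p : ℤ) * ((p : ℤ) ^ n - 1) ≤ (p : ℤ) ^ (n + 1) - 1 := by
      rw [pow_succ]
      linarith [(by exact_mod_cast hp : (1 : ℤ) ≤ p)]
    calc (p : ℤ) ^ (i + 1) * ((p : ℤ) ^ n - 1) * qq p n k
        = (p : ℤ) ^ i * ((p * ((p : ℤ) ^ n - 1)) * qq p n k) := by ring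
      _ ≤ (p : ℤ) ^ i * (((p : ℤ) ^ (n + 1) - 1) * qq p n k) := by gcongr
      _ = (p : ℤ) ^ i * ((p : ℤ) ^ (k * (n + 1)) - 1) := by rw [pow_succ_sub_one_mul_qq]
  have hrr : rr p n m = p ^ (i + 1) * (p ^ n - 1) * qq p n k + k + p ^ i := rfl
  rw [hrr, hm]
  clear_value i k
  zify [hpn] at hq ⊢
  linarith

theorem rr_le_two_mul_pow {p : ℕ} (hp : 2 ≤ p) (n m : ℕ) : rr p n m ≤ 2 * p ^ m := by
  have hm : m < p ^ m := Nat.lt_pow_self hp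
  have := rr_le_pow_add_div (by omega : 1 ≤ p) n m
  have := Nat.div_le_self m (n + 1)
  omega

theorem too_long_general (p n : ℕ) (hp : p.Prime) (hodd : Odd p)
    (j i k : ℕ) :
    ((rr' p n j : ℤ) + (rr p n (j + i + 1) : ℤ)) * ((p : ℤ) ^ n - 1)
      < (p : ℤ) ^ (n + j + i + 2) + (p : ℤ) ^ k - (p : ℤ) ^ (j + i + 1) - 1 := by
  have hp3 : 3 ≤ p := by
    obtain ⟨m, rfl⟩ := hodd
    have := hp.two_le
    omega
  have hsum : (rr' p n j : ℤ) + rr p n (j + i + 1) ≤ 3 * p ^ (j + i + 1) := by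
    have := pow_le_pow_right₀ hp.one_le (show j + 1 ≤ j + i + 1 by omega)
    have : rr' p n j ≤ p ^ (j + 1) := Nat.sub_le _ _
    have := rr_le_two_mul_pow hp.two_le n (j + i + 1)
    exact_mod_cast (by omega : rr' p n j + rr p n (j + i + 1) ≤ 3 * p ^ (j + i + 1))
  have hsplit : (p : ℤ) ^ (n + j + i + 2) = p * p ^ n * p ^ (j + i + 1) := by ring
  have hp1 : (1 : ℤ) ≤ p := by exact_mod_cast hp.one_le
  set A := (p : ℤ) ^ n
  set B := (p : ℤ) ^ (j + i + 1)
  have hA : 1 ≤ A := one_le_pow₀ hp1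
  have hB : 1 ≤ B := one_le_pow₀ hp1
  have hk : 1 ≤ (p : ℤ) ^ k := one_le_pow₀ hp1
  calc ((rr' p n j : ℤ) + rr p n (j + i + 1)) * (A - 1) ≤ 3 * B * (A - 1) := by
        gcongr
    _ ≤ p * A * B - 3 * B := by
        have hp3' : (0 : ℤ) ≤ p - 3 := by linarith [(by exact_mod_cast hp3 : (3 : ℤ) ≤ p)]
        linarith [mul_nonneg (mul_nonneg hp3' (by positivity : (0 : ℤ) ≤ A)) (by positivity : 0 ≤ B)]
    _ < (p : ℤ) ^ (n + j + i + 2) + (p : ℤ) ^ k - B - 1 := by rw [hsplit]; linarith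

/-- For an odd prime `p`, `n >= 1`, and `0 <= k <= i < n`:
`(r'(j) + r(j+i+1))(p^n - 1) < p^{n+j+i+2} + p^k - p^{j+i+1} - 1`. -/
theorem too_long (p n : ℕ) (hp : p.Prime) (hodd : Odd p) (hn : 1 ≤ n)
    (j i k : ℕ) (hki : k ≤ i) (hin : i < n) :
    ((rr' p n j : ℤ) + (rr p n (j + i + 1) : ℤ)) * ((p : ℤ) ^ n - 1)
      < (p : ℤ) ^ (n + j + i + 2) + (p : ℤ) ^ k - (p : ℤ) ^ (j + i + 1) - 1 :=
  too_long_general p n hp hodd j i k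
end
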